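/- The image of the Lagrangian handle Γ⁺(t) = ((μ+μ⁻¹)t, μt), μ = |t|², is a Lagrangian submanifold of (ℝ^{2(n-1)}, ω = Σᵢ dpᵢ ∧ dqᵢ): the pullback (Γ⁺)*ω vanishes identically on ℝ^{n-1} \ {0}. -/

import Mathlib

open Finset Matrix

/-!
`Γ⁺` is radial, `Γ⁺(t) = (F(|t|²) t, G(|t|²) t)`, so its differential is
`v ↦ (F v + 2F'⟨t,v⟩ t, G v + 2G'⟨t,v⟩ t)`. Expanding `ω(dΓ⁺ v, dΓ⁺ w)`, every term is a multiple
of `⟨v,w⟩` or of `⟨t,v⟩⟨t,w⟩`, both symmetric in `v, w`, so the antisymmetrisation kills them all.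
-/

variable {ι : Type*} [Fintype ι]

/-- `Σᵢ dpᵢ ∧ dqᵢ` on pairs `(q, p)`. -/
def stdSymplecticForm (v w : (ι → ℝ) × (ι → ℝ)) : ℝ := v.2 ⬝ᵥ w.1 - w.2 ⬝ᵥ v.1

theorem hasFDerivAt_dotProduct_self (t : ι → ℝ) :
    HasFDerivAt (fun x : ι → ℝ => x ⬝ᵥ x)
      (∑ i, (2 * t i) • ContinuousLinearMap.proj (R := ℝ) (φ := fun _ : ι => ℝ) i) t := by
  have h := HasFDerivAt.fun_sum (u := univ) fun i _ =>
    (hasFDerivAt_apply (𝕜 := ℝ) (F' := fun _ : ι => ℝ) i t).fun_mul (hasFDerivAt_apply i t)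
  refine (h.congr_fderiv ?_).congr_of_eventuallyEq (.of_forall fun x => ?_)
  · ext u
    simp [two_mul, add_smul]
  · simp [dotProduct]

theorem fderiv_radial_apply {F G : ℝ → ℝ} {F' G' : ℝ} {t : ι → ℝ}
    (hF : HasDerivAt F F' (t ⬝ᵥ t)) (hG : HasDerivAt G G' (t ⬝ᵥ t)) (v : ι → ℝ) :
    fderiv ℝ (fun x : ι → ℝ => (F (x ⬝ᵥ x) • x, G (x ⬝ᵥ x) • x)) t v =
      (F (t ⬝ᵥ t) • v + (2 * F' * (t ⬝ᵥ v)) • t, G (t ⬝ᵥ t) • v + (2 * G' * (t ⬝ᵥ v)) • t) := by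
  have hμ := hasFDerivAt_dotProduct_self t
  have hΓ : HasFDerivAt (fun x : ι → ℝ => (F (x ⬝ᵥ x) • x, G (x ⬝ᵥ x) • x)) _ t :=
    ((hF.comp_hasFDerivAt (f := fun x => x ⬝ᵥ x) t hμ).smul (hasFDerivAt_id t)).prodMk
      ((hG.comp_hasFDerivAt (f := fun x => x ⬝ᵥ x) t hμ).smul (hasFDerivAt_id t))
  rw [hΓ.fderiv]
  simp [dotProduct, mul_sum, mul_assoc, mul_left_comm]

theorem stdSymplecticForm_fderiv_radial {F G : ℝ → ℝ} {F' G' : ℝ} {t : ι → ℝ}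
    (hF : HasDerivAt F F' (t ⬝ᵥ t)) (hG : HasDerivAt G G' (t ⬝ᵥ t)) (v w : ι → ℝ) :
    stdSymplecticForm (fderiv ℝ (fun x : ι → ℝ => (F (x ⬝ᵥ x) • x, G (x ⬝ᵥ x) • x)) t v)
      (fderiv ℝ (fun x : ι → ℝ => (F (x ⬝ᵥ x) • x, G (x ⬝ᵥ x) • x)) t w) = 0 := by
  simp only [stdSymplecticForm, fderiv_radial_apply hF hG, add_dotProduct, dotProduct_add,
    smul_dotProduct, dotProduct_smul, smul_eq_mul]
  rw [dotProduct_comm w v, dotProduct_comm v t, dotProduct_comm w t]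
  ring

theorem stmt5_general (n : ℕ)
    (ω : ((Fin (n-1) → ℝ) × (Fin (n-1) → ℝ)) →
      ((Fin (n-1) → ℝ) × (Fin (n-1) → ℝ)) → ℝ)
    (hω : ∀ v w, ω v w = ∑ i, (v.2 i * w.1 i - w.2 i * v.1 i))
    (μ : (Fin (n-1) → ℝ) → ℝ) (hμ : ∀ t, μ t = ∑ i, (t i)^2)
    (Γ : (Fin (n-1) → ℝ) → (Fin (n-1) → ℝ) × (Fin (n-1) → ℝ))
    (hΓ : ∀ t, Γ t = ((μ t + (μ t)⁻¹) • t, μ t • t)) :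
    ∀ t : Fin (n-1) → ℝ, t ≠ 0 → ∀ v w : Fin (n-1) → ℝ,
      ω (fderiv ℝ Γ t v) (fderiv ℝ Γ t w) = 0 := by
  intro t ht v w
  have hμ_eq : μ = fun x => x ⬝ᵥ x := funext fun x => by simp only [hμ, dotProduct, sq]
  have hΓ_eq : Γ = fun x => ((fun s => s + s⁻¹) (x ⬝ᵥ x) • x, id (x ⬝ᵥ x) • x) :=
    funext fun x => by rw [hΓ, hμ_eq]; rfl
  have htt : t ⬝ᵥ t ≠ 0 := fun h => ht (dotProduct_self_eq_zero.mp h)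
  have hω_eq : ω = stdSymplecticForm := funext₂ fun v w => by
    simp only [hω, stdSymplecticForm, dotProduct, sum_sub_distrib]
  rw [hω_eq, hΓ_eq]
  have hF : HasDerivAt (fun s : ℝ => s + s⁻¹) (1 + -((t ⬝ᵥ t) ^ 2)⁻¹) (t ⬝ᵥ t) :=
    (hasDerivAt_id' _).add (hasDerivAt_inv htt)
  exact stdSymplecticForm_fderiv_radial hF (hasDerivAt_id _) v w

/-- The image of the Lagrangian handle `Γ⁺(t) = ((μ+μ⁻¹)t, μt)`, `μ = |t|²`, is
Lagrangian for `ω = Σ dpᵢ ∧ dqᵢ`: the pullback `(Γ⁺)*ω` vanishes identically on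
`ℝ^{n-1} \ {0}`. -/
theorem stmt5 (n : ℕ) (hn : 2 ≤ n)
    (ω : ((Fin (n-1) → ℝ) × (Fin (n-1) → ℝ)) →
      ((Fin (n-1) → ℝ) × (Fin (n-1) → ℝ)) → ℝ)
    (hω : ∀ v w, ω v w = ∑ i, (v.2 i * w.1 i - w.2 i * v.1 i))
    (μ : (Fin (n-1) → ℝ) → ℝ) (hμ : ∀ t, μ t = ∑ i, (t i)^2)
    (Γ : (Fin (n-1) → ℝ) → (Fin (n-1) → ℝ) × (Fin (n-1) → ℝ))
    (hΓ : ∀ t, Γ t = ((μ t + (μ t)⁻¹) • t, μ t • t)) :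
    ∀ t : Fin (n-1) → ℝ, t ≠ 0 → ∀ v w : Fin (n-1) → ℝ,
      ω (fderiv ℝ Γ t v) (fderiv ℝ Γ t w) = 0 :=
  stmt5_general n ω hω μ hμ Γ hΓ
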